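/- arXiv:2209.03825 — 4 statements merged into one kernel-verified Lean document; each statement's English description precedes it below -/
import Mathlib

section
/- For all positive reals k1, k2, μ1, μ2, h and all z > 0, the function ū1(z) = (2 + h k1 μ2 + h k1 μ1 z) / ((1/2) k2 h² μ1² z² + ((3/2) h² k2 μ1 μ2 + h k1 μ1) z + 1 + h k1 μ2 + h² k2 μ2²) is strictly decreasing in z. -/
theorem ubar1_strictAnti
    (k1 k2 μ1 μ2 h : ℝ) (hk1 : 0 < k1) (hk2 : 0 < k2) (hμ1 : 0 < μ1)
    (hμ2 : 0 < μ2) (hh : 0 < h) :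
    StrictAntiOn (fun z : ℝ =>
      (2 + h * k1 * μ2 + h * k1 * μ1 * z) /
        ((1/2) * k2 * h^2 * μ1^2 * z^2 + ((3/2) * h^2 * k2 * μ1 * μ2 + h * k1 * μ1) * z
          + 1 + h * k1 * μ2 + h^2 * k2 * μ2^2))
      (Set.Ioi (0 : ℝ)) := by
  intro x hx y hy hxy
  simp only [Set.mem_Ioi] at hx hy
  have key : ∀ z : ℝ, 0 < z →
      0 < (1/2) * k2 * h^2 * μ1^2 * z^2 + ((3/2) * h^2 * k2 * μ1 * μ2 + h * k1 * μ1) * z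
          + 1 + h * k1 * μ2 + h^2 * k2 * μ2^2 := by
    intro z hz
    have h1 : 0 < (1/2) * k2 * h^2 * μ1^2 * z^2 := by positivity
    have h2 : 0 < ((3/2) * h^2 * k2 * μ1 * μ2 + h * k1 * μ1) * z := by positivity
    have h3 : 0 < h * k1 * μ2 := by positivity
    have h4 : 0 < h^2 * k2 * μ2^2 := by positivity
    linarith
  have hDx := key x hx
  have hDy := key y hy
  simp only
  rw [div_lt_div_iff₀ hDy hDx]
  have hB : 0 < (2 + h*k1*μ2) * ((1/2)*k2*h^2*μ1^2) * (x+y)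
      + h*k1*μ1 * ((1/2)*k2*h^2*μ1^2) * (x*y)
      + 3*h^2*k2*μ1*μ2 + h*k1*μ1 + (1/2)*h^3*k1*k2*μ1*μ2^2 := by
    have h1 : 0 < (2 + h*k1*μ2) * ((1/2)*k2*h^2*μ1^2) * (x+y) :=
      mul_pos (by positivity) (by linarith)
    have h2 : 0 < h*k1*μ1 * ((1/2)*k2*h^2*μ1^2) * (x*y) :=
      mul_pos (by positivity) (mul_pos hx hy)
    have h3 : 0 < 3*h^2*k2*μ1*μ2 := by positivity
    have h4 : 0 < h*k1*μ1 := by positivity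
    have h5 : 0 < (1/2)*h^3*k1*k2*μ1*μ2^2 := by positivity
    linarith
  have hfac :
      (2 + h * k1 * μ2 + h * k1 * μ1 * x) *
        ((1/2) * k2 * h^2 * μ1^2 * y^2 + ((3/2) * h^2 * k2 * μ1 * μ2 + h * k1 * μ1) * y
          + 1 + h * k1 * μ2 + h^2 * k2 * μ2^2)
      - (2 + h * k1 * μ2 + h * k1 * μ1 * y) *
        ((1/2) * k2 * h^2 * μ1^2 * x^2 + ((3/2) * h^2 * k2 * μ1 * μ2 + h * k1 * μ1) * x
          + 1 + h * k1 * μ2 + h^2 * k2 * μ2^2)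
      = (y - x) * ((2 + h*k1*μ2) * ((1/2)*k2*h^2*μ1^2) * (x+y)
      + h*k1*μ1 * ((1/2)*k2*h^2*μ1^2) * (x*y)
      + 3*h^2*k2*μ1*μ2 + h*k1*μ1 + (1/2)*h^3*k1*k2*μ1*μ2^2) := by
    ring
  have hpos : 0 < (y - x) * ((2 + h*k1*μ2) * ((1/2)*k2*h^2*μ1^2) * (x+y)
      + h*k1*μ1 * ((1/2)*k2*h^2*μ1^2) * (x*y)
      + 3*h^2*k2*μ1*μ2 + h*k1*μ1 + (1/2)*h^3*k1*k2*μ1*μ2^2) := mul_pos (by linarith) hB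
  linarith [hfac, hpos]
end

section
/- For all positive reals k1, k2, μ1, μ2, h and all z ≥ 0, one has 0 ≤ ū1(z) ≤ (2 + h k1 μ2)/(1 + h k1 μ2 + h² k2 μ2²) < 2, where ū1(z) = (2 + h k1 μ2 + h k1 μ1 z) / ((1/2) k2 h² μ1² z² + ((3/2) h² k2 μ1 μ2 + h k1 μ1) z + 1 + h k1 μ2 + h² k2 μ2²). -/
theorem ubar1_bounds
    (k1 k2 μ1 μ2 h : ℝ) (hk1 : 0 < k1) (hk2 : 0 < k2) (hμ1 : 0 < μ1)
    (hμ2 : 0 < μ2) (hh : 0 < h) (z : ℝ) (hz : 0 ≤ z) :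
    0 ≤ (2 + h * k1 * μ2 + h * k1 * μ1 * z) /
        ((1/2) * k2 * h^2 * μ1^2 * z^2 + ((3/2) * h^2 * k2 * μ1 * μ2 + h * k1 * μ1) * z
          + 1 + h * k1 * μ2 + h^2 * k2 * μ2^2) ∧
    (2 + h * k1 * μ2 + h * k1 * μ1 * z) /
        ((1/2) * k2 * h^2 * μ1^2 * z^2 + ((3/2) * h^2 * k2 * μ1 * μ2 + h * k1 * μ1) * z
          + 1 + h * k1 * μ2 + h^2 * k2 * μ2^2)
      ≤ (2 + h * k1 * μ2) / (1 + h * k1 * μ2 + h^2 * k2 * μ2^2) ∧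
    (2 + h * k1 * μ2) / (1 + h * k1 * μ2 + h^2 * k2 * μ2^2) < 2 := by
  have hD : 0 < (1/2) * k2 * h^2 * μ1^2 * z^2 + ((3/2) * h^2 * k2 * μ1 * μ2 + h * k1 * μ1) * z
      + 1 + h * k1 * μ2 + h^2 * k2 * μ2^2 := by positivity
  have hD0 : 0 < 1 + h * k1 * μ2 + h^2 * k2 * μ2^2 := by positivity
  refine ⟨by positivity, ?_, ?_⟩
  · rw [div_le_div_iff₀ hD hD0]
    have h1 : 0 ≤ z^2 * (k2 * h^2 * μ1^2) := by positivity
    have h2 : 0 ≤ z^2 * (k2 * h^2 * μ1^2 * (h * k1 * μ2)) := by positivity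
    have h3 : 0 ≤ z * (h^2 * k2 * μ1 * μ2) := by positivity
    have h4 : 0 ≤ z * (h^2 * k2 * μ1 * μ2 * (h * k1 * μ2)) := by positivity
    have h5 : 0 ≤ z * (h * k1 * μ1) := by positivity
    nlinarith [h1, h2, h3, h4, h5]
  · rw [div_lt_iff₀ hD0]
    nlinarith [mul_pos hh hk1, mul_pos (mul_pos hh hh) hk2, mul_pos hμ2 hμ2]
end

section
/- For all positive reals k1, k2, μ1, μ2, h and all z ≥ 0, one has 0 ≤ ū2(z) ≤ (1 + h k1 μ2)/(1 + h k1 μ2 + h² k2 μ2²) < 1, where ū2(z) = (1 + h k1 μ2 + h k1 μ1 z) / ((1/2) k2 h² μ1² z² + ((3/2) h² k2 μ1 μ2 + h k1 μ1) z + 1 + h k1 μ2 + h² k2 μ2²). -/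
theorem ubar2_bounds
    (k1 k2 μ1 μ2 h : ℝ) (hk1 : 0 < k1) (hk2 : 0 < k2) (hμ1 : 0 < μ1)
    (hμ2 : 0 < μ2) (hh : 0 < h) (z : ℝ) (hz : 0 ≤ z) :
    0 ≤ (1 + h * k1 * μ2 + h * k1 * μ1 * z) /
        ((1/2) * k2 * h^2 * μ1^2 * z^2 + ((3/2) * h^2 * k2 * μ1 * μ2 + h * k1 * μ1) * z
          + 1 + h * k1 * μ2 + h^2 * k2 * μ2^2) ∧
    (1 + h * k1 * μ2 + h * k1 * μ1 * z) /
        ((1/2) * k2 * h^2 * μ1^2 * z^2 + ((3/2) * h^2 * k2 * μ1 * μ2 + h * k1 * μ1) * z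
          + 1 + h * k1 * μ2 + h^2 * k2 * μ2^2)
      ≤ (1 + h * k1 * μ2) / (1 + h * k1 * μ2 + h^2 * k2 * μ2^2) ∧
    (1 + h * k1 * μ2) / (1 + h * k1 * μ2 + h^2 * k2 * μ2^2) < 1 := by
  have hD : 0 < (1/2) * k2 * h^2 * μ1^2 * z^2 + ((3/2) * h^2 * k2 * μ1 * μ2 + h * k1 * μ1) * z
          + 1 + h * k1 * μ2 + h^2 * k2 * μ2^2 := by positivity
  have hE : 0 < 1 + h * k1 * μ2 + h^2 * k2 * μ2^2 := by positivity
  have hN : 0 ≤ 1 + h * k1 * μ2 + h * k1 * μ1 * z := by positivity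
  refine ⟨div_nonneg hN hD.le, ?_, ?_⟩
  · rw [div_le_div_iff₀ hD hE]
    have hB : 0 ≤ (1 + h*k1*μ2) * ((1/2)*k2*h^2*μ1^2*z + (3/2)*h^2*k2*μ1*μ2) - h*k1*μ1*(h^2*k2*μ2^2) := by
      nlinarith [mul_nonneg hz (by positivity : (0:ℝ) ≤ (1 + h*k1*μ2) * ((1/2)*k2*h^2*μ1^2)),
        (by positivity : (0:ℝ) < h^2*k2*μ1*μ2),
        (by positivity : (0:ℝ) < h^3*k1*k2*μ1*μ2^2)]
    nlinarith [mul_nonneg hz hB]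
  · rw [div_lt_one hE]; nlinarith [mul_pos (mul_pos hh hh) (mul_pos hk2 (mul_pos hμ2 hμ2))]
end

section
/- If positive reals k1, k2, μ2, h satisfy (2 + h k1 μ2)/(1 + h k1 μ2 + h² k2 μ2²) ≤ 1.8 and (1 + h k1 μ2)/(1 + h k1 μ2 + h² k2 μ2²) ≤ 0.97, then for every z ≥ 0 and every μ1 > 0, the pair (ū1(z), ū2(z)) satisfies 0 ≤ ū1(z) ≤ 1.8 and 0 ≤ ū2(z) ≤ 0.97, where ū1(z) = (2 + h k1 μ2 + h k1 μ1 z)/α(z), ū2(z) = (1 + h k1 μ2 + h k1 μ1 z)/α(z), α(z) = (1/2) k2 h² μ1² z² + ((3/2) h² k2 μ1 μ2 + h k1 μ1) z + 1 + h k1 μ2 + h² k2 μ2². -/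
theorem stability_gain_condition
    (k1 k2 μ2 h : ℝ) (hk1 : 0 < k1) (hk2 : 0 < k2) (hμ2 : 0 < μ2) (hh : 0 < h)
    (h1 : (2 + h * k1 * μ2) / (1 + h * k1 * μ2 + h ^ 2 * k2 * μ2 ^ 2) ≤ 1.8)
    (h2 : (1 + h * k1 * μ2) / (1 + h * k1 * μ2 + h ^ 2 * k2 * μ2 ^ 2) ≤ 0.97) :
    ∀ z : ℝ, 0 ≤ z → ∀ μ1 : ℝ, 0 < μ1 →
      let α : ℝ := (1/2) * k2 * h ^ 2 * μ1 ^ 2 * z ^ 2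
        + ((3/2) * h ^ 2 * k2 * μ1 * μ2 + h * k1 * μ1) * z
        + 1 + h * k1 * μ2 + h ^ 2 * k2 * μ2 ^ 2
      (0 ≤ (2 + h * k1 * μ2 + h * k1 * μ1 * z) / α ∧
        (2 + h * k1 * μ2 + h * k1 * μ1 * z) / α ≤ 1.8) ∧
      (0 ≤ (1 + h * k1 * μ2 + h * k1 * μ1 * z) / α ∧
        (1 + h * k1 * μ2 + h * k1 * μ1 * z) / α ≤ 0.97) := by
  intro z hz μ1 hμ1
  have hD : (0:ℝ) < 1 + h * k1 * μ2 + h ^ 2 * k2 * μ2 ^ 2 := by positivity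
  rw [div_le_iff₀ hD] at h1 h2
  have hα : (0:ℝ) < (1/2) * k2 * h ^ 2 * μ1 ^ 2 * z ^ 2
      + ((3/2) * h ^ 2 * k2 * μ1 * μ2 + h * k1 * μ1) * z
      + 1 + h * k1 * μ2 + h ^ 2 * k2 * μ2 ^ 2 := by positivity
  have hn2 : (0:ℝ) ≤ 2 + h * k1 * μ2 + h * k1 * μ1 * z := by positivity
  have hn1 : (0:ℝ) ≤ 1 + h * k1 * μ2 + h * k1 * μ1 * z := by positivity
  refine ⟨⟨div_nonneg hn2 hα.le, ?_⟩, ⟨div_nonneg hn1 hα.le, ?_⟩⟩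
  · rw [div_le_iff₀ hα]
    nlinarith [mul_nonneg (mul_nonneg (mul_nonneg hh.le hk1.le) hμ1.le) hz,
      mul_nonneg (mul_nonneg (mul_nonneg (mul_nonneg (sq_nonneg h) hk2.le) hμ1.le) hμ2.le) hz,
      mul_nonneg (mul_nonneg (mul_nonneg ((pow_pos hh 2).le) hk2.le) (sq_nonneg μ1)) (sq_nonneg z)]
  · rw [div_le_iff₀ hα]
    have key : 0.03 * (h * k1) ≤ 0.97 * (h ^ 2 * k2 * μ2) := by nlinarith
    nlinarith [mul_le_mul_of_nonneg_left key (mul_nonneg hμ1.le hz), sq_nonneg z,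
      mul_nonneg (mul_nonneg (mul_nonneg (sq_nonneg h) hk2.le) (sq_nonneg μ1)) (sq_nonneg z)]
end
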